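/- Let G be a simple connected non-complete graph on n ≥ 4 vertices with normalized Laplacian eigenvalues λ_1 ≥ ... ≥ λ_{n-1} > 0 = λ_n. Suppose λ_1 ≥ θ, λ_2 ≥ β, θ ≥ β, and θ + β(n-2) > n. If α < 0 or α > 1, then ∑_{i=1}^{n-1} λ_i^α ≥ θ^α + β^α + (n-θ-β)^α/(n-3)^{α-1}. -/

import Mathlib

open Matrix Finset

/-- The normalized Laplacian `D^{-1/2} (D - A) D^{-1/2}` of a simple graph. -/
noncomputable def normLap {n : ℕ} (G : SimpleGraph (Fin n)) [DecidableRel G.Adj] :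
    Matrix (Fin n) (Fin n) ℝ :=
  let Dinvhalf : Matrix (Fin n) (Fin n) ℝ :=
    Matrix.diagonal fun i => (Real.sqrt (G.degree i))⁻¹
  Dinvhalf * (Matrix.diagonal (fun i => (G.degree i : ℝ)) - G.adjMatrix ℝ) * Dinvhalf

/-!
For `α < 0` or `α > 1` the map `f x = x ^ α` is convex on `(0, ∞)`, so `f x ≥ f c + f' c (x - c)`
with `c = (n - θ - β) / (n - 3)`. The hypothesis `θ + β (n - 2) > n` says `c < β ≤ θ`; as `f'` is
increasing, also `f λ₁ ≥ f θ + f' c (λ₁ - θ)` and `f λ₂ ≥ f β + f' c (λ₂ - β)`. Adding these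
bounds for the `n - 1` positive eigenvalues, whose sum is the trace `n` of the normalized
Laplacian (its diagonal is `1`), the linear terms cancel.
-/

lemma one_add_mul_sub_one_le_rpow {α t : ℝ} (hα : α < 0 ∨ 1 < α) (ht : 0 < t) :
    1 + α * (t - 1) ≤ t ^ α := by
  rcases hα with hα | hα
  · calc 1 + α * (t - 1) ≤ 1 + α * Real.log t := by
          nlinarith [Real.log_le_sub_one_of_pos ht]
      _ ≤ Real.exp (Real.log t * α) := by linarith [Real.add_one_le_exp (Real.log t * α)]
      _ = t ^ α := (Real.rpow_def_of_pos ht α).symm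
  · simpa using one_add_mul_self_le_rpow_one_add (s := t - 1) (by linarith) hα.le

lemma rpow_add_mul_sub_le_rpow {α c x : ℝ} (hα : α < 0 ∨ 1 < α) (hc : 0 < c) (hx : 0 < x) :
    c ^ α + α * c ^ (α - 1) * (x - c) ≤ x ^ α := by
  have hcα : 0 < c ^ α := Real.rpow_pos_of_pos hc α
  calc c ^ α + α * c ^ (α - 1) * (x - c) = c ^ α * (1 + α * (x / c - 1)) := by
        rw [Real.rpow_sub_one hc.ne']; field_simp
    _ ≤ c ^ α * (x / c) ^ α :=
        mul_le_mul_of_nonneg_left (one_add_mul_sub_one_le_rpow hα (div_pos hx hc)) hcα.le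
    _ = x ^ α := by rw [Real.div_rpow hx.le hc.le]; field_simp

lemma mul_rpow_sub_one_le_mul_rpow_sub_one {α c y : ℝ} (hα : α < 0 ∨ 1 < α) (hc : 0 < c)
    (hcy : c ≤ y) : α * c ^ (α - 1) ≤ α * y ^ (α - 1) := by
  rcases hα with hα | hα
  · exact mul_le_mul_of_nonpos_left (Real.rpow_le_rpow_of_nonpos hc hcy (by linarith)) hα.le
  · exact mul_le_mul_of_nonneg_left (Real.rpow_le_rpow hc.le hcy (by linarith)) (by linarith)

lemma rpow_add_mul_sub_le_rpow_of_le {α c y x : ℝ} (hα : α < 0 ∨ 1 < α) (hc : 0 < c)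
    (hcy : c ≤ y) (hyx : y ≤ x) : y ^ α + α * c ^ (α - 1) * (x - y) ≤ x ^ α := by
  have hy : 0 < y := hc.trans_le hcy
  have hslope := mul_le_mul_of_nonneg_right (mul_rpow_sub_one_le_mul_rpow_sub_one hα hc hcy)
    (sub_nonneg.mpr hyx)
  linarith [rpow_add_mul_sub_le_rpow hα hy (hy.trans_le hyx)]

lemma mul_rpow_eq_rpow_div_rpow_sub_one {m c : ℝ} (hm : 0 < m) (hc : 0 ≤ c) (α : ℝ) :
    m * c ^ α = (m * c) ^ α / m ^ (α - 1) := by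
  rw [Real.mul_rpow hm.le hc, Real.rpow_sub_one hm.ne']
  field_simp

section SumRpow

variable {ι : Type*} [DecidableEq ι] {s : Finset ι} {x : ι → ℝ} {i j : ι} {α θ β c : ℝ}

lemma card_erase_erase (hi : i ∈ s) (hj : j ∈ s) (hij : i ≠ j) :
    #((s.erase i).erase j) = #s - 2 := by
  rw [card_erase_of_mem (mem_erase.mpr ⟨hij.symm, hj⟩), card_erase_of_mem hi, Nat.sub_sub]

lemma sum_eq_add_add_sum_erase_erase {M : Type*} [AddCommMonoid M] (f : ι → M) (hi : i ∈ s)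
    (hj : j ∈ s) (hij : i ≠ j) : ∑ k ∈ s, f k = f i + (f j + ∑ k ∈ (s.erase i).erase j, f k) := by
  rw [← add_sum_erase _ f hi, ← add_sum_erase _ f (mem_erase.mpr ⟨hij.symm, hj⟩)]

lemma add_rpow_add_card_mul_rpow_le_sum_rpow (hi : i ∈ s) (hj : j ∈ s) (hij : i ≠ j)
    (hx : ∀ k ∈ s, 0 < x k) (hα : α < 0 ∨ 1 < α) (hθ : θ ≤ x i) (hβ : β ≤ x j) (hc : 0 < c)
    (hcθ : c ≤ θ) (hcβ : c ≤ β) (hsum : ∑ k ∈ s, x k = θ + β + (#s - 2 : ℕ) * c) :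
    θ ^ α + β ^ α + (#s - 2 : ℕ) * c ^ α ≤ ∑ k ∈ s, x k ^ α := by
  set t := (s.erase i).erase j
  have hcard : #t = #s - 2 := card_erase_erase hi hj hij
  have hsplit (f : ι → ℝ) := sum_eq_add_add_sum_erase_erase f hi hj hij
  set K := α * c ^ (α - 1)
  have hrest : ∑ k ∈ t, (c ^ α + K * (x k - c)) ≤ ∑ k ∈ t, x k ^ α :=
    sum_le_sum fun k hk ↦ rpow_add_mul_sub_le_rpow hα hc
      (hx k (mem_of_mem_erase (mem_of_mem_erase hk)))
  rw [sum_add_distrib, ← mul_sum, sum_sub_distrib, sum_const, sum_const, nsmul_eq_mul,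
    nsmul_eq_mul, hcard] at hrest
  rw [hsplit x] at hsum
  rw [hsplit]
  linear_combination rpow_add_mul_sub_le_rpow_of_le hα hc hcθ hθ +
    rpow_add_mul_sub_le_rpow_of_le hα hc hcβ hβ + hrest - K * hsum

lemma add_rpow_add_rpow_div_le_sum_rpow (hi : i ∈ s) (hj : j ∈ s) (hij : i ≠ j)
    (hx : ∀ k ∈ s, 0 < x k) (hα : α < 0 ∨ 1 < α) (hθ : θ ≤ x i) (hβ : β ≤ x j) (hβθ : β ≤ θ)
    (hs : 3 ≤ #s) (hlarge : ∑ k ∈ s, x k - θ - β ≤ (#s - 2 : ℕ) * β) :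
    θ ^ α + β ^ α + (∑ k ∈ s, x k - θ - β) ^ α / ((#s - 2 : ℕ) : ℝ) ^ (α - 1) ≤
      ∑ k ∈ s, x k ^ α := by
  set m : ℝ := ((#s - 2 : ℕ) : ℝ)
  have hm : 0 < m := by simp only [m]; exact_mod_cast (by omega : 0 < #s - 2)
  have hrest : 0 < ∑ k ∈ (s.erase i).erase j, x k := by
    refine sum_pos (fun k hk ↦ hx k (mem_of_mem_erase (mem_of_mem_erase hk))) ?_
    rw [← card_pos, card_erase_erase hi hj hij]
    omega
  have hpos : 0 < ∑ k ∈ s, x k - θ - β := by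
    linarith [sum_eq_add_add_sum_erase_erase x hi hj hij]
  set c := (∑ k ∈ s, x k - θ - β) / m
  have hmc : m * c = ∑ k ∈ s, x k - θ - β := mul_div_cancel₀ _ hm.ne'
  have hcβ : c ≤ β := (div_le_iff₀' hm).mpr hlarge
  have key := add_rpow_add_card_mul_rpow_le_sum_rpow hi hj hij hx hα hθ hβ (div_pos hpos hm)
    (hcβ.trans hβθ) hcβ (by linarith)
  rwa [mul_rpow_eq_rpow_div_rpow_sub_one hm (div_pos hpos hm).le, hmc] at key

end SumRpow

section NormLap

variable {n : ℕ} (G : SimpleGraph (Fin n)) [DecidableRel G.Adj]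

lemma normLap_apply_self {i : Fin n} (hi : 0 < G.degree i) : normLap G i i = 1 := by
  have hd : (0 : ℝ) < G.degree i := by exact_mod_cast hi
  simp only [normLap, mul_diagonal, diagonal_mul, Matrix.sub_apply, diagonal_apply_eq,
    SimpleGraph.adjMatrix_apply, if_neg (G.irrefl (v := i))]
  field_simp
  rw [sub_zero, Real.sq_sqrt hd.le]

variable [Nontrivial (Fin n)] {G}

lemma trace_normLap (hG : G.Preconnected) : (normLap G).trace = n := by
  simp [trace, normLap_apply_self G (hG.degree_pos_of_nontrivial _)]

lemma sum_eigenvalues_normLap (hG : G.Preconnected) (hH : (normLap G).IsHermitian) :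
    ∑ i, hH.eigenvalues i = n := by
  simpa [trace_normLap hG] using hH.trace_eq_sum_eigenvalues.symm

end NormLap

theorem sAlpha_lower_bound_two {n : ℕ} (hn : 4 ≤ n) (G : SimpleGraph (Fin n)) [DecidableRel G.Adj]
    (hG : G.Connected) (hH : (normLap G).IsHermitian)
    (lam : Fin n → ℝ) (hanti : Antitone lam)
    (hperm : ∃ σ : Equiv.Perm (Fin n), lam = hH.eigenvalues ∘ σ)
    (hlast : lam ⟨n - 1, by omega⟩ = 0) (hpos : lam ⟨n - 2, by omega⟩ > 0)
    (θ β α : ℝ) (hθ1 : lam ⟨0, by omega⟩ ≥ θ) (hβ1 : lam ⟨1, by omega⟩ ≥ β)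
    (hθβ : θ ≥ β) (hsum : θ + β * ((n : ℝ) - 2) > n)
    (hα : α < 0 ∨ 1 < α) :
    (∑ i ∈ Finset.univ.filter (fun i : Fin n => (i : ℕ) < n - 1), lam i ^ α) ≥
      θ ^ α + β ^ α + ((n : ℝ) - θ - β) ^ α / ((n : ℝ) - 3) ^ (α - 1) := by
  have : Nontrivial (Fin n) := Fin.nontrivial_iff_two_le.mpr (by omega)
  set s := Finset.univ.filter (fun i : Fin n => (i : ℕ) < n - 1)
  have hcard : ((#s - 2 : ℕ) : ℝ) = n - 3 := by
    rw [Fin.card_filter_val_lt, min_eq_right (by omega), Nat.sub_sub, Nat.cast_sub (by omega)]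
    norm_num
  have htrace : ∑ i ∈ s, lam i = n := by
    obtain ⟨σ, rfl⟩ := hperm
    rw [sum_filter_of_ne fun i _ hi ↦ ?_]
    · exact (Equiv.sum_comp σ hH.eigenvalues).trans (sum_eigenvalues_normLap hG.preconnected hH)
    contrapose! hi
    rwa [show i = ⟨n - 1, by omega⟩ by ext; simp only; omega]
  have hspos (i) (hi : i ∈ s) : 0 < lam i :=
    hpos.trans_le (hanti (Fin.le_iff_val_le_val.mpr (by simp [s] at hi; simp only; omega)))
  have key := add_rpow_add_rpow_div_le_sum_rpow (i := ⟨0, by omega⟩) (j := ⟨1, by omega⟩)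
    (by simp [s]; omega) (by simp [s]; omega) (Fin.ne_of_val_ne zero_ne_one) hspos hα hθ1 hβ1
    hθβ (by rw [Fin.card_filter_val_lt]; omega) (by rw [htrace, hcard]; linarith)
  rwa [htrace, hcard] at key
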